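/- Detail-energy control with coarse-to-detail forcing (Proposition 'Detail-energy control with coarse-to-detail forcing'): let M : H → H be linear, b ∈ H, σ ≥ 0, and w, w' ∈ [0,1]. Let X, η : Ω → H be square-integrable random matrices on a probability space (Ω, F, P) such that η is independent of X and E[η] = 0. Define the updated state X' := M(A_w X) + b + σ·A_{w'} η, and let κ and ρ be any real numbers with ‖Q_d(M(Q_c z))‖₂ ≤ κ‖Q_c z‖₂ and ‖Q_d(M(Q_d z))‖₂ ≤ ρ‖Q_d z‖₂ for all z ∈ H. Then E[‖Q_d X'‖₂²] ≤ 3κ²·E[‖Q_c X‖₂²] + 3ρ²·(1−w)²·E[‖Q_d X‖₂²] + 3‖Q_d b‖₂² + σ²·(1−w')²·E[‖Q_d η‖₂²]. -/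

import Mathlib

/-! Since `S_k` is idempotent, `A_w = Q_c + (1 - w) Q_d` and `Q_d A_w = (1 - w) Q_d`, so
`Q_d X' = (Q_d M Q_c X + (1 - w) Q_d M Q_d X + Q_d b) + σ (1 - w') Q_d η`. The bracket is a
function of `X` and the last term a mean-zero function of `η`; by independence the cross term has
expectation zero, so the second moments add. The bracket is then bounded by the triangle
inequality, `(a + b + c)² ≤ 3 (a² + b² + c²)` and the two operator bounds. -/

open scoped BigOperators
open MeasureTheory

namespace Stroke

/-- The space of real `(m·k) × (n·k)` matrices, as functions on index pairs. -/
abbrev H (m n k : ℕ) : Type := Fin (m * k) → Fin (n * k) → ℝ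

/-- The grid index `(i/k)·k + r`, i.e. the `r`-th index inside the block containing `i`. -/
def blk (d k : ℕ) (i : Fin (d * k)) (r : Fin k) : Fin (d * k) :=
  ⟨i.val / k * k + r.val, by
    have hk : 0 < k := r.pos
    have h1 : i.val / k < d := (Nat.div_lt_iff_lt_mul hk).mpr i.isLt
    calc i.val / k * k + r.val < i.val / k * k + k := Nat.add_lt_add_left r.isLt _
      _ = (i.val / k + 1) * k := by ring
      _ ≤ d * k := Nat.mul_le_mul (Nat.succ_le_of_lt h1) le_rfl⟩

/-- The stroke operator `S_k`: average pooling over each `k × k` block followed by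
nearest-neighbor upsampling, i.e. every entry of block `B_{p,q}` is replaced by the
block average. -/
noncomputable def S {m n k : ℕ} (x : H m n k) : H m n k :=
  fun i j => (1 / (k : ℝ) ^ 2) *
    ∑ r1 : Fin k, ∑ r2 : Fin k, x (blk m k i r1) (blk n k j r2)

/-- The inner product `⟨x,y⟩ = ∑_{i,j} x[i,j]·y[i,j]` on `H`. -/
def ip {m n k : ℕ} (x y : H m n k) : ℝ := ∑ i, ∑ j, x i j * y i j

/-- The norm `‖x‖₂ = √⟨x,x⟩` on `H`. -/
noncomputable def norm2 {m n k : ℕ} (x : H m n k) : ℝ := Real.sqrt (ip x x)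

/-- The stroke mixing map `A_w = (1-w)·id + w·S_k`. -/
noncomputable def A {m n k : ℕ} (w : ℝ) (x : H m n k) : H m n k :=
  (1 - w) • x + w • S x

/-- The coarse projection `Q_c = S_k`. -/
noncomputable def Qc {m n k : ℕ} (x : H m n k) : H m n k := S x

/-- The detail projection `Q_d = id - S_k`. -/
noncomputable def Qd {m n k : ℕ} (x : H m n k) : H m n k := x - S x

/-- A matrix is block-constant if it is constant on each block `B_{p,q}`. -/
def BlockConst {m n k : ℕ} (v : H m n k) : Prop :=
  ∀ (i i' : Fin (m * k)) (j j' : Fin (n * k)),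
    i.val / k = i'.val / k → j.val / k = j'.val / k → v i j = v i' j'

variable {m n k : ℕ}

lemma blk_val_div (d : ℕ) (i : Fin (d * k)) (r : Fin k) :
    (blk d k i r).val / k = i.val / k := by
  have hk : 0 < k := r.pos
  simp only [blk]
  rw [add_comm, Nat.add_mul_div_right _ _ hk, Nat.div_eq_of_lt r.isLt, zero_add]

lemma blk_blk (d : ℕ) (i : Fin (d * k)) (r s : Fin k) :
    blk d k (blk d k i r) s = blk d k i s :=
  Fin.ext <| congrArg (· * k + s.val) (blk_val_div d i r)

lemma S_apply_blk (x : H m n k) (i : Fin (m * k)) (j : Fin (n * k)) (r₁ r₂ : Fin k) :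
    S x (blk m k i r₁) (blk n k j r₂) = S x i j := by
  simp only [S, blk_blk]

theorem S_S (x : H m n k) : S (S x) = S x := by
  funext i j
  rcases Nat.eq_zero_or_pos k with rfl | hk
  · exact (Fin.cast (Nat.mul_zero m) i).elim0
  show (1 / (k : ℝ) ^ 2) * ∑ r₁ : Fin k, ∑ r₂ : Fin k, S x (blk m k i r₁) (blk n k j r₂)
    = S x i j
  simp only [S_apply_blk, Finset.sum_const, Finset.card_univ, Fintype.card_fin, nsmul_eq_mul]
  field_simp

noncomputable def strokeₗ (m n k : ℕ) : H m n k →ₗ[ℝ] H m n k where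
  toFun := S
  map_add' x y := by
    funext i j
    simp only [S, Pi.add_apply, Finset.sum_add_distrib, mul_add]
  map_smul' c x := by
    funext i j
    simp only [S, Pi.smul_apply, smul_eq_mul, ← Finset.mul_sum, RingHom.id_apply]
    ring

noncomputable def detailₗ (m n k : ℕ) : H m n k →ₗ[ℝ] H m n k :=
  LinearMap.id - strokeₗ m n k

lemma strokeₗ_apply (x : H m n k) : strokeₗ m n k x = S x := rfl

lemma detailₗ_apply (x : H m n k) : detailₗ m n k x = Qd x := rfl

lemma Qd_A (w : ℝ) (x : H m n k) : Qd (A w x) = (1 - w) • Qd x := by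
  simp only [Qd, A, ← strokeₗ_apply, map_add, map_smul]
  simp only [strokeₗ_apply, S_S]
  module

lemma A_eq_Qc_add_smul_Qd (w : ℝ) (x : H m n k) : A w x = Qc x + (1 - w) • Qd x := by
  simp only [A, Qc, Qd, smul_sub]
  module

lemma Qd_update (M : H m n k →ₗ[ℝ] H m n k) (b x y : H m n k) (σ w w' : ℝ) :
    Qd (M (A w x) + b + σ • A w' y)
      = Qd (M (Qc x)) + (1 - w) • Qd (M (Qd x)) + Qd b + (σ * (1 - w')) • Qd y := by
  rw [A_eq_Qc_add_smul_Qd w x]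
  simp only [← detailₗ_apply, map_add, map_smul]
  rw [detailₗ_apply (A w' y), Qd_A, smul_smul]
  rfl

-- `H` carries Mathlib's sup norm; flattening into `EuclideanSpace` realises `norm2` as an
-- inner-product norm.
noncomputable def toEuclidean (m n k : ℕ) :
    H m n k →ₗ[ℝ] EuclideanSpace ℝ (Fin (m * k) × Fin (n * k)) where
  toFun x := WithLp.toLp 2 (Function.uncurry x)
  map_add' _ _ := rfl
  map_smul' _ _ := rfl

lemma norm2_eq_norm_toEuclidean (x : H m n k) : norm2 x = ‖toEuclidean m n k x‖ := by
  rw [EuclideanSpace.norm_eq, norm2, ip, Fintype.sum_prod_type]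
  simp only [Real.norm_eq_abs, sq, abs_mul_abs_self]
  rfl

lemma norm_add_smul_add_sq_le {F : Type*} [SeminormedAddCommGroup F] [NormedSpace ℝ F]
    {a b c : F} {α β : ℝ} (t : ℝ) (ha : ‖a‖ ≤ α) (hb : ‖b‖ ≤ β) :
    ‖a + t • b + c‖ ^ 2 ≤ 3 * α ^ 2 + 3 * t ^ 2 * β ^ 2 + 3 * ‖c‖ ^ 2 := by
  have htb : ‖t • b‖ ≤ |t| * β := by
    rw [norm_smul, Real.norm_eq_abs]
    exact mul_le_mul_of_nonneg_left hb (abs_nonneg t)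
  have hα : 0 ≤ α := (norm_nonneg a).trans ha
  have hβ : 0 ≤ |t| * β := (norm_nonneg _).trans htb
  have h : ‖a + t • b + c‖ ≤ α + |t| * β + ‖c‖ := (norm_add₃_le).trans (by gcongr)
  calc ‖a + t • b + c‖ ^ 2 ≤ (α + |t| * β + ‖c‖) ^ 2 := by gcongr
    _ ≤ 3 * α ^ 2 + 3 * (|t| * β) ^ 2 + 3 * ‖c‖ ^ 2 := by
      nlinarith [sq_nonneg (α - |t| * β), sq_nonneg (α - ‖c‖), sq_nonneg (|t| * β - ‖c‖)]
    _ = 3 * α ^ 2 + 3 * t ^ 2 * β ^ 2 + 3 * ‖c‖ ^ 2 := by rw [mul_pow, sq_abs]; ring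

open ProbabilityTheory

section Probability

variable {Ω : Type*} [MeasurableSpace Ω] {P : Measure Ω}

lemma _root_.MeasureTheory.MemLp.linearMap_comp {E F : Type*} [NormedAddCommGroup E]
    [NormedSpace ℝ E] [FiniteDimensional ℝ E] [NormedAddCommGroup F] [NormedSpace ℝ F] {p : ENNReal}
    {f : Ω → E} (hf : MemLp f p P) (L : E →ₗ[ℝ] F) : MemLp (fun ω ↦ L (f ω)) p P :=
  L.toContinuousLinearMap.comp_memLp' hf

lemma integral_le_of_le_mul_add_mul_add_const [IsProbabilityMeasure P] {f g₁ g₂ : Ω → ℝ}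
    {a₁ a₂ c : ℝ} (hf : Integrable f P) (hg₁ : Integrable g₁ P) (hg₂ : Integrable g₂ P)
    (h : ∀ ω, f ω ≤ a₁ * g₁ ω + a₂ * g₂ ω + c) :
    ∫ ω, f ω ∂P ≤ a₁ * ∫ ω, g₁ ω ∂P + a₂ * ∫ ω, g₂ ω ∂P + c := by
  have hg : Integrable (fun ω ↦ a₁ * g₁ ω + a₂ * g₂ ω) P :=
    (hg₁.const_mul a₁).add (hg₂.const_mul a₂)
  calc ∫ ω, f ω ∂P ≤ ∫ ω, a₁ * g₁ ω + a₂ * g₂ ω + c ∂P :=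
        integral_mono hf (hg.add (integrable_const c)) h
    _ = a₁ * ∫ ω, g₁ ω ∂P + a₂ * ∫ ω, g₂ ω ∂P + c := by
      rw [integral_add hg (integrable_const c), integral_add (hg₁.const_mul a₁)
        (hg₂.const_mul a₂), integral_const_mul, integral_const_mul, integral_const,
        probReal_univ, one_smul]

variable {E : Type*} [NormedAddCommGroup E] [InnerProductSpace ℝ E] [CompleteSpace E]
  [MeasurableSpace E] [BorelSpace E]

theorem integral_norm_add_sq_of_indepFun [IsFiniteMeasure P] {U V : Ω → E}
    (hUV : IndepFun U V P) (hU : MemLp U 2 P) (hV : MemLp V 2 P) (hV0 : ∫ ω, V ω ∂P = 0) :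
    ∫ ω, ‖U ω + V ω‖ ^ 2 ∂P = ∫ ω, ‖U ω‖ ^ 2 ∂P + ∫ ω, ‖V ω‖ ^ 2 ∂P := by
  have hU1 := hU.integrable one_le_two
  have hV1 := hV.integrable one_le_two
  have hcross : Integrable (fun ω ↦ 2 * inner ℝ (U ω) (V ω)) P :=
    (hUV.integrable_bilin hU1 hV1 (innerSL ℝ)).const_mul 2
  have hcross0 : ∫ ω, 2 * inner ℝ (U ω) (V ω) ∂P = 0 := by
    have h := hUV.integral_bilin hU1 hV1 (innerSL ℝ)
    rw [hV0, map_zero] at h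
    rw [integral_const_mul]
    exact mul_eq_zero_of_right 2 h
  have hsq : Integrable (fun ω ↦ ‖U ω‖ ^ 2 + 2 * inner ℝ (U ω) (V ω)) P :=
    (hU.integrable_norm_pow two_ne_zero).add hcross
  simp only [norm_add_sq_real]
  rw [integral_add hsq (hV.integrable_norm_pow two_ne_zero),
    integral_add (hU.integrable_norm_pow two_ne_zero) hcross, hcross0, add_zero]

theorem integral_norm_add_sq_comp_of_indepFun [IsFiniteMeasure P]
    {V W : Type*} [NormedAddCommGroup V] [NormedSpace ℝ V] [FiniteDimensional ℝ V]
    [MeasurableSpace V] [BorelSpace V] [NormedAddCommGroup W] [NormedSpace ℝ W]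
    [FiniteDimensional ℝ W] [MeasurableSpace W] [BorelSpace W]
    {X : Ω → V} {Y : Ω → W} (hXY : IndepFun X Y P) (hX : MemLp X 2 P) (hY : MemLp Y 2 P)
    (hY0 : ∫ ω, Y ω ∂P = 0) (F : V →ₗ[ℝ] E) (G : W →ₗ[ℝ] E) (c : E) :
    ∫ ω, ‖F (X ω) + c + G (Y ω)‖ ^ 2 ∂P
      = ∫ ω, ‖F (X ω) + c‖ ^ 2 ∂P + ∫ ω, ‖G (Y ω)‖ ^ 2 ∂P := by
  refine integral_norm_add_sq_of_indepFun ?_ ((hX.linearMap_comp F).add (memLp_const c))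
    (hY.linearMap_comp G) ?_
  · exact hXY.comp (F.continuous_of_finiteDimensional.add continuous_const).measurable
      G.continuous_of_finiteDimensional.measurable
  · simpa [hY0] using G.toContinuousLinearMap.integral_comp_comm (hY.integrable one_le_two)

end Probability

theorem detail_energy_control_general {m n k : ℕ}
    {Ω : Type*} [MeasurableSpace Ω] (P : Measure Ω) [IsProbabilityMeasure P]
    (M : H m n k →ₗ[ℝ] H m n k) (b : H m n k) (σ w w' : ℝ)
    (X η : Ω → H m n k) (hX : MemLp X 2 P) (hη : MemLp η 2 P)
    (hindep : ProbabilityTheory.IndepFun η X P)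
    (hη0 : ∫ ω, η ω ∂P = 0)
    (κ ρ : ℝ)
    (hκ : ∀ z : H m n k, norm2 (Qd (M (Qc z))) ≤ κ * norm2 (Qc z))
    (hρ : ∀ z : H m n k, norm2 (Qd (M (Qd z))) ≤ ρ * norm2 (Qd z)) :
    ∫ ω, norm2 (Qd (M (A w (X ω)) + b + σ • A w' (η ω))) ^ 2 ∂P
      ≤ 3 * κ ^ 2 * ∫ ω, norm2 (Qc (X ω)) ^ 2 ∂P
        + 3 * ρ ^ 2 * (1 - w) ^ 2 * ∫ ω, norm2 (Qd (X ω)) ^ 2 ∂P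
        + 3 * norm2 (Qd b) ^ 2
        + σ ^ 2 * (1 - w') ^ 2 * ∫ ω, norm2 (Qd (η ω)) ^ 2 ∂P := by
  simp only [norm2_eq_norm_toEuclidean] at hκ hρ ⊢
  set T := toEuclidean m n k
  set D := detailₗ m n k
  set F := T ∘ₗ (D ∘ₗ M ∘ₗ strokeₗ m n k + (1 - w) • D ∘ₗ M ∘ₗ D)
  set G := (σ * (1 - w')) • T ∘ₗ D
  have hsplit : ∀ ω, T (Qd (M (A w (X ω)) + b + σ • A w' (η ω)))
      = (F (X ω) + T (Qd b)) + G (η ω) := fun ω ↦ by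
    rw [Qd_update]
    simp only [map_add, map_smul]
    rfl
  have hdrift : ∀ x, ‖F x + T (Qd b)‖ ^ 2 ≤ 3 * κ ^ 2 * ‖T (Qc x)‖ ^ 2
      + 3 * ρ ^ 2 * (1 - w) ^ 2 * ‖T (Qd x)‖ ^ 2 + 3 * ‖T (Qd b)‖ ^ 2 := fun x ↦ by
    convert norm_add_smul_add_sq_le (1 - w) (hκ x) (hρ x) (c := T (Qd b)) using 1
    · rfl
    · ring
  have hnoise : ∀ y, ‖G y‖ ^ 2 = σ ^ 2 * (1 - w') ^ 2 * ‖T (Qd y)‖ ^ 2 := fun y ↦ by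
    simp only [G, LinearMap.smul_apply, norm_smul, mul_pow, Real.norm_eq_abs, sq_abs]
    rfl
  simp_rw [hsplit]
  rw [integral_norm_add_sq_comp_of_indepFun hindep.symm hX hη hη0]
  simp_rw [hnoise]
  rw [integral_const_mul]
  gcongr
  exact integral_le_of_le_mul_add_mul_add_const
    (((hX.linearMap_comp F).add (memLp_const _)).integrable_norm_pow two_ne_zero)
    ((hX.linearMap_comp (T ∘ₗ strokeₗ m n k)).integrable_norm_pow two_ne_zero)
    ((hX.linearMap_comp (T ∘ₗ D)).integrable_norm_pow two_ne_zero) fun ω ↦ hdrift (X ω)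

/-- detail-energy control with coarse-to-detail forcing. Under the affine
surrogate update `X' = M(A_w X) + b + σ·A_{w'} η` with `η` independent of `X`,
`E[η] = 0`, and operator-norm-type bounds `‖Q_d(M(Q_c z))‖₂ ≤ κ‖Q_c z‖₂` and
`‖Q_d(M(Q_d z))‖₂ ≤ ρ‖Q_d z‖₂`, one has
`E[‖Q_d X'‖₂²] ≤ 3κ²·E[‖Q_c X‖₂²] + 3ρ²(1−w)²·E[‖Q_d X‖₂²] + 3‖Q_d b‖₂²
  + σ²(1−w')²·E[‖Q_d η‖₂²]`. -/
theorem detail_energy_control {m n k : ℕ}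
    (hm : 0 < m) (hn : 0 < n) (hk : 0 < k)
    {Ω : Type*} [MeasurableSpace Ω] (P : Measure Ω) [IsProbabilityMeasure P]
    (M : H m n k →ₗ[ℝ] H m n k) (b : H m n k) (σ w w' : ℝ)
    (hσ : 0 ≤ σ) (hw0 : 0 ≤ w) (hw1 : w ≤ 1) (hw'0 : 0 ≤ w') (hw'1 : w' ≤ 1)
    (X η : Ω → H m n k) (hX : MemLp X 2 P) (hη : MemLp η 2 P)
    (hindep : ProbabilityTheory.IndepFun η X P)
    (hη0 : ∫ ω, η ω ∂P = 0)
    (κ ρ : ℝ)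
    (hκ : ∀ z : H m n k, norm2 (Qd (M (Qc z))) ≤ κ * norm2 (Qc z))
    (hρ : ∀ z : H m n k, norm2 (Qd (M (Qd z))) ≤ ρ * norm2 (Qd z)) :
    ∫ ω, norm2 (Qd (M (A w (X ω)) + b + σ • A w' (η ω))) ^ 2 ∂P
      ≤ 3 * κ ^ 2 * ∫ ω, norm2 (Qc (X ω)) ^ 2 ∂P
        + 3 * ρ ^ 2 * (1 - w) ^ 2 * ∫ ω, norm2 (Qd (X ω)) ^ 2 ∂P
        + 3 * norm2 (Qd b) ^ 2
        + σ ^ 2 * (1 - w') ^ 2 * ∫ ω, norm2 (Qd (η ω)) ^ 2 ∂P :=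
  detail_energy_control_general P M b σ w w' X η hX hη hindep hη0 κ ρ hκ hρ

end Stroke
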